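/- Let 𝒮₈ be the set of pairs (τ, n) of integers with 0 ≤ τ ≤ 4, n ≥ 2, and (τ, n) ∉ {(3,2), (4,2), (4,3)}. For (τ, n) ∈ 𝒮₈ let M_{(τ,n)} be the rank 3 positive definite lattice with a basis (𝔬, μ, ν) whose Gram matrix is [[3,1,0],[1,3,τ],[0,τ,2n]], in which 𝔬 is a distinguished element. Then M_{(τ,n)} is admissible if and only if either τ ∈ {1, 3}, or τ ∈ {0, 2, 4} and n is odd. -/

import Mathlib

/-!
If `τ` and `n` are both even then `B(x, x) ≡ -(x₀ + x₁)² (mod 4)` for the coordinates `xᵢ` of `x`,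
and polarization turns this into `B(x, y) ≡ (x₀ + x₁)(y₀ + y₁) (mod 2)`; together they make every
binary Gram determinant divisible by `4`, so `(**)` fails.

Otherwise the sublattice spanned by `𝔬` and `aμ + ν` is primitive of discriminant
`8a² + 6aτ + 6n`, and for a suitable `a` this equals `2(x² + xy + y²)` with `x, y` coprime.
Such a number satisfies `(**)`: `x² + xy + y²` is odd and not divisible by `9`, and a prime
`p ∣ x² + xy + y²` with `p ∤ 6` makes `-3` a square mod `p`, hence gives a primitive cube root
of unity mod `p`, so `p ≡ 1 (mod 3)`.
-/

/-- An integer `d` satisfies property `(**)`: `4 ∤ d`, `9 ∤ d`, and `p ∤ d` for every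
odd prime `p ≡ 2 (mod 3)`. -/
def DStar (d : ℤ) : Prop :=
  ¬ (4 ∣ d) ∧ ¬ (9 ∣ d) ∧ ∀ p : ℕ, p.Prime → p % 2 = 1 → p % 3 = 2 → ¬ ((p : ℤ) ∣ d)

/-- A positive definite lattice `(M, B)` with distinguished element `𝔬` is admissible if
it has a rank `2` primitive sublattice `K` containing `𝔬` whose discriminant
satisfies `(**)`. -/
def IsAdmissible {M : Type*} [AddCommGroup M] [Module ℤ M]
    (B : M →ₗ[ℤ] M →ₗ[ℤ] ℤ) (o : M) : Prop :=
  ∃ (K : Submodule ℤ M) (c : Module.Basis (Fin 2) ℤ K),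
    o ∈ K ∧
    (∀ (x : M) (m : ℤ), m ≠ 0 → m • x ∈ K → x ∈ K) ∧
    DStar (B (c 0 : M) (c 0 : M) * B (c 1 : M) (c 1 : M) -
           B (c 0 : M) (c 1 : M) * B (c 1 : M) (c 0 : M))

theorem ZMod.not_isSquare_neg_three {p : ℕ} [hp : Fact p.Prime] (hp2 : p ≠ 2) (hp3 : p % 3 = 2) :
    ¬IsSquare (-3 : ZMod p) := by
  rintro ⟨u, hu⟩
  have h2 : (2 : ZMod p) ≠ 0 := Ring.two_ne_zero (by rwa [ZMod.ringChar_zmod_n])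
  -- `(u - 1) / 2` is a primitive cube root of unity, so `3 ∣ p - 1`.
  have hω : ((u - 1) / 2) ^ 2 + (u - 1) / 2 + 1 = 0 := by
    field_simp
    linear_combination -hu
  have hω1 : (u - 1) / 2 ≠ 1 := by
    intro h
    have h3 : ((3 : ℕ) : ZMod p) = 0 := by rw [h] at hω; push_cast; linear_combination hω
    rw [ZMod.natCast_eq_zero_iff, Nat.prime_dvd_prime_iff_eq hp.out Nat.prime_three] at h3
    omega
  have hω3 : ((u - 1) / 2) ^ 3 = 1 := by linear_combination ((u - 1) / 2 - 1) * hω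
  have hω0 : (u - 1) / 2 ≠ 0 := by rintro h; simp [h] at hω3
  have := orderOf_eq_prime (p := 3) hω3 hω1 ▸ ZMod.orderOf_dvd_card_sub_one hω0
  omega

theorem IsCoprime.odd_sq_add_mul_add_sq {x y : ℤ} (h : IsCoprime x y) :
    Odd (x ^ 2 + x * y + y ^ 2) := by
  have key : ∀ a b : ZMod 2, a ^ 2 + a * b + b ^ 2 = 0 → a = 0 ∧ b = 0 := by decide
  rw [← Int.not_even_iff_odd, even_iff_two_dvd]
  intro h2
  have h0 := (ZMod.intCast_zmod_eq_zero_iff_dvd _ 2).mpr h2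
  push_cast at h0
  obtain ⟨hx, hy⟩ := key _ _ h0
  rw [ZMod.intCast_zmod_eq_zero_iff_dvd] at hx hy
  exact Int.prime_two.not_isUnit (h.isUnit_of_dvd' hx hy)

theorem IsCoprime.not_nine_dvd_sq_add_mul_add_sq {x y : ℤ} (h : IsCoprime x y) :
    ¬9 ∣ x ^ 2 + x * y + y ^ 2 := by
  have key : ∀ a b : ZMod 9, a ^ 2 + a * b + b ^ 2 = 0 → 3 * a = 0 ∧ 3 * b = 0 := by decide
  intro h9
  have h0 := (ZMod.intCast_zmod_eq_zero_iff_dvd _ 9).mpr h9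
  push_cast at h0
  obtain ⟨hx, hy⟩ := key _ _ h0
  have three_dvd {z : ℤ} (hz : 3 * (z : ZMod 9) = 0) : 3 ∣ z := by
    have : (3 * 3 : ℤ) ∣ 3 * z :=
      (ZMod.intCast_zmod_eq_zero_iff_dvd _ 9).mp (by push_cast; exact hz)
    exact Int.dvd_of_mul_dvd_mul_left three_ne_zero this
  exact Int.prime_three.not_isUnit (h.isUnit_of_dvd' (three_dvd hx) (three_dvd hy))

theorem IsCoprime.isSquare_neg_three_of_dvd {x y : ℤ} (h : IsCoprime x y) {p : ℕ}
    [hp : Fact p.Prime] (hp2 : p ≠ 2) (hdvd : (p : ℤ) ∣ x ^ 2 + x * y + y ^ 2) :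
    IsSquare (-3 : ZMod p) := by
  have h2 : (2 : ZMod p) ≠ 0 := Ring.two_ne_zero (by rwa [ZMod.ringChar_zmod_n])
  have h0 := (ZMod.intCast_zmod_eq_zero_iff_dvd _ p).mpr hdvd
  push_cast at h0
  by_cases hy : (y : ZMod p) = 0
  · have hx : (x : ZMod p) = 0 := by simpa [hy] using h0
    rw [ZMod.intCast_zmod_eq_zero_iff_dvd] at hx hy
    exact absurd (h.isUnit_of_dvd' hx hy) (Nat.prime_iff_prime_int.mp hp.out).not_isUnit
  · refine ⟨(2 * x + y) / y, ?_⟩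
    field_simp
    linear_combination -4 * h0

theorem IsCoprime.dStar_two_mul_sq_add_mul_add_sq {x y : ℤ} (h : IsCoprime x y) :
    DStar (2 * (x ^ 2 + x * y + y ^ 2)) := by
  refine ⟨fun h4 => ?_, fun h9 => h.not_nine_dvd_sq_add_mul_add_sq (by omega), ?_⟩
  · exact Int.not_even_iff_odd.mpr h.odd_sq_add_mul_add_sq (even_iff_two_dvd.mpr (by omega))
  · intro p hp hp2 hp3 hdvd
    have := Fact.mk hp
    rcases (Nat.prime_iff_prime_int.mp hp).dvd_or_dvd hdvd with h2 | hQ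
    · have := Nat.le_of_dvd two_pos (Int.natCast_dvd_natCast.mp h2)
      have := hp.two_le
      omega
    · exact ZMod.not_isSquare_neg_three (by omega) hp3 (h.isSquare_neg_three_of_dvd (by omega) hQ)

open Submodule in
theorem isAdmissible_of_span_pair {M : Type*} [AddCommGroup M] [Module ℤ M]
    (B : M →ₗ[ℤ] M →ₗ[ℤ] ℤ) {o u v : M} (hli : LinearIndependent ℤ ![u, v])
    (ho : o ∈ span ℤ (Set.range ![u, v]))
    (hprim : ∀ (x : M) (m : ℤ), m ≠ 0 → m • x ∈ span ℤ (Set.range ![u, v]) →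
      x ∈ span ℤ (Set.range ![u, v]))
    (hD : DStar (B u u * B v v - B u v * B v u)) :
    IsAdmissible B o := by
  -- `IsAdmissible` equips `K` with `AddCommGroup.toIntModule` rather than `Submodule.module`;
  -- the two agree since a `ℤ`-module structure is unique.
  have hbasis : ∀ inst : Module ℤ (span ℤ (Set.range ![u, v])),
      ∃ c : @Module.Basis (Fin 2) ℤ _ _ _ inst, ∀ i, (c i : M) = ![u, v] i := by
    intro inst
    obtain rfl : inst = (span ℤ (Set.range ![u, v])).module := Subsingleton.elim _ _
    exact ⟨Module.Basis.span hli, fun i => by simp [Module.Basis.span_apply]⟩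
  obtain ⟨c, hc⟩ := hbasis _
  exact ⟨_, c, ho, hprim, by simpa [hc] using hD⟩

theorem four_dvd_mul_sub_mul_of_four_dvd_add_sq {M : Type*} [AddCommGroup M] [Module ℤ M]
    {B : M →ₗ[ℤ] M →ₗ[ℤ] ℤ} (hB : ∀ x y, B x y = B y x) (ℓ : M →ₗ[ℤ] ℤ)
    (hQ : ∀ x, 4 ∣ B x x + ℓ x ^ 2) (x y : M) :
    4 ∣ B x x * B y y - B x y * B y x := by
  obtain ⟨p, hp⟩ := hQ x
  obtain ⟨q, hq⟩ := hQ y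
  obtain ⟨r, hr⟩ := hQ (x + y)
  simp only [map_add, LinearMap.add_apply, hB y x] at hr
  have hxy : B x y = 2 * (r - p - q) - ℓ x * ℓ y := by linarith
  rw [hB y x, hxy]
  exact ⟨4 * p * q - p * ℓ y ^ 2 - q * ℓ x ^ 2 - (r - p - q) ^ 2 + (r - p - q) * ℓ x * ℓ y,
    by linear_combination (4 * q - ℓ y ^ 2) * hp + (B x x) * hq⟩

section Gram

variable {τ n : ℤ} {M : Type*} [AddCommGroup M] [Module ℤ M] {B : M →ₗ[ℤ] M →ₗ[ℤ] ℤ}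
  {b : Module.Basis (Fin 3) ℤ M}

theorem apply_eq_of_gram
    (hgram : ∀ i j : Fin 3, B (b i) (b j) = !![3, 1, 0; 1, 3, τ; 0, τ, 2 * n] i j) (x y : M) :
    B x y = 3 * b.repr x 0 * b.repr y 0 + b.repr x 0 * b.repr y 1 + b.repr x 1 * b.repr y 0
      + 3 * b.repr x 1 * b.repr y 1 + τ * (b.repr x 1 * b.repr y 2 + b.repr x 2 * b.repr y 1)
      + 2 * n * b.repr x 2 * b.repr y 2 := by
  rw [← LinearMap.sum_repr_mul_repr_mul b b]
  simp [Finsupp.sum_fintype, Fin.sum_univ_three, hgram]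
  ring

theorem four_dvd_mul_sub_mul_of_even (hB : ∀ x y, B x y = B y x)
    (hgram : ∀ i j : Fin 3, B (b i) (b j) = !![3, 1, 0; 1, 3, τ; 0, τ, 2 * n] i j)
    (hτ : Even τ) (hn : Even n) (x y : M) :
    4 ∣ B x x * B y y - B x y * B y x := by
  obtain ⟨t, rfl⟩ := hτ
  obtain ⟨s, rfl⟩ := hn
  refine four_dvd_mul_sub_mul_of_four_dvd_add_sq hB (b.coord 0 + b.coord 1) (fun z => ?_) x y
  refine ⟨b.repr z 0 ^ 2 + b.repr z 0 * b.repr z 1 + b.repr z 1 ^ 2 + t * b.repr z 1 * b.repr z 2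
    + s * b.repr z 2 ^ 2, ?_⟩
  rw [apply_eq_of_gram hgram]
  simp only [LinearMap.add_apply, Module.Basis.coord_apply]
  ring

theorem mem_span_iff_repr (a : ℤ) (z : M) :
    z ∈ Submodule.span ℤ (Set.range ![b 0, a • b 1 + b 2]) ↔ b.repr z 1 = a * b.repr z 2 := by
  rw [Matrix.range_cons_cons_empty, Submodule.mem_span_pair]
  constructor
  · rintro ⟨s, t, rfl⟩
    simp [mul_comm]
  · intro h
    refine ⟨b.repr z 0, b.repr z 2, b.ext_elem fun i => ?_⟩
    fin_cases i <;> simp [h, mul_comm]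

theorem linearIndependent_pair (a : ℤ) : LinearIndependent ℤ ![b 0, a • b 1 + b 2] := by
  refine LinearIndependent.pair_iff.mpr fun s t hst => ⟨?_, ?_⟩
  · simpa using congrArg (b.repr · 0) hst
  · simpa using congrArg (b.repr · 2) hst

theorem isAdmissible_of_two_mul_eq
    (hgram : ∀ i j : Fin 3, B (b i) (b j) = !![3, 1, 0; 1, 3, τ; 0, τ, 2 * n] i j)
    {a x y : ℤ} (hxy : IsCoprime x y)
    (h : 8 * a ^ 2 + 6 * a * τ + 6 * n = 2 * (x ^ 2 + x * y + y ^ 2)) :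
    IsAdmissible B (b 0) := by
  refine isAdmissible_of_span_pair B (linearIndependent_pair a) (Submodule.subset_span ⟨0, rfl⟩)
    (fun z m hm hmz => ?_) ?_
  · rw [mem_span_iff_repr] at hmz ⊢
    simp only [map_zsmul, Finsupp.smul_apply, smul_eq_mul] at hmz
    exact mul_left_cancel₀ hm (by linear_combination hmz)
  · -- the Gram matrix of `(b 0, a • b 1 + b 2)` is `[[3, a], [a, 3a² + 2aτ + 2n]]`
    convert hxy.dStar_two_mul_sq_add_mul_add_sq using 1
    simp only [apply_eq_of_gram hgram]
    simp only [map_add, map_zsmul, Module.Basis.repr_self,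
      Finsupp.smul_single, Finsupp.coe_add, Pi.add_apply, Finsupp.single_eq_same,
      Finsupp.single_eq_of_ne, ne_eq, Fin.reduceEq, not_false_eq_true, Int.zsmul_eq_mul]
    linear_combination h

end Gram

theorem C8_divisor_admissibility_general
    (τ n : ℤ) (hτ0 : 0 ≤ τ) (hτ4 : τ ≤ 4)
    {M : Type*} [AddCommGroup M] [Module ℤ M]
    (B : M →ₗ[ℤ] M →ₗ[ℤ] ℤ)
    (hsymm : ∀ x y : M, B x y = B y x)
    (b : Module.Basis (Fin 3) ℤ M)
    (hgram : ∀ i j : Fin 3, B (b i) (b j) = !![3, 1, 0; 1, 3, τ; 0, τ, 2 * n] i j) :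
    IsAdmissible B (b 0) ↔ (τ = 1 ∨ τ = 3) ∨ ((τ = 0 ∨ τ = 2 ∨ τ = 4) ∧ Odd n) := by
  constructor
  · rintro ⟨K, c, -, -, hD⟩
    by_contra hcases
    have hτ : Even τ := by rw [Int.even_iff]; omega
    have hn : Even n := by
      rw [← Int.not_odd_iff_even]
      exact fun hn => hcases (.inr ⟨by omega, hn⟩)
    exact hD.1 (four_dvd_mul_sub_mul_of_even hsymm hgram hτ hn _ _)
  · rintro ((rfl | rfl) | ⟨hτ, m, rfl⟩)
    · exact isAdmissible_of_two_mul_eq hgram (a := n - 1) (x := 2 * n) (y := 1 - 2 * n)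
        ⟨1, 1, by ring⟩ (by ring)
    · exact isAdmissible_of_two_mul_eq hgram (a := n - 7) (x := 2 * n - 9) (y := 13 - 2 * n)
        ⟨n ^ 2 - 6 * n - 3, n ^ 2 - 4 * n - 2, by ring⟩ (by ring)
    · rcases hτ with rfl | rfl | rfl
      · exact isAdmissible_of_two_mul_eq hgram (a := m) (x := 2 * m + 2) (y := -2 * m - 1)
          ⟨1, 1, by ring⟩ (by ring)
      · exact isAdmissible_of_two_mul_eq hgram (a := m - 3) (x := 2 * m - 1) (y := 5 - 2 * m)
          ⟨m ^ 2 - 2 * m - 1, m ^ 2, by ring⟩ (by ring)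
      · exact isAdmissible_of_two_mul_eq hgram (a := m - 3) (x := 2 * m - 1) (y := 2 - 2 * m)
          ⟨1, 1, by ring⟩ (by ring)

/-- For `(τ, n) ∈ 𝒮₈` (i.e. `0 ≤ τ ≤ 4`, `n ≥ 2`, `(τ,n) ∉ {(3,2),(4,2),(4,3)}`),
let `M_{(τ,n)}` be the rank `3` positive definite lattice with basis `(𝔬, μ, ν)` and
Gram matrix `[[3,1,0],[1,3,τ],[0,τ,2n]]` (in which `𝔬` is distinguished).
Then `M_{(τ,n)}` is admissible iff `τ ∈ {1,3}`, or `τ ∈ {0,2,4}` and `n` is odd. -/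
theorem C8_divisor_admissibility
    (τ n : ℤ) (hτ0 : 0 ≤ τ) (hτ4 : τ ≤ 4) (hn : 2 ≤ n)
    (hex1 : ¬ (τ = 3 ∧ n = 2)) (hex2 : ¬ (τ = 4 ∧ n = 2)) (hex3 : ¬ (τ = 4 ∧ n = 3))
    {M : Type*} [AddCommGroup M] [Module ℤ M]
    (B : M →ₗ[ℤ] M →ₗ[ℤ] ℤ)
    (hsymm : ∀ x y : M, B x y = B y x)
    (b : Module.Basis (Fin 3) ℤ M)
    (hgram : ∀ i j : Fin 3, B (b i) (b j) = !![3, 1, 0; 1, 3, τ; 0, τ, 2 * n] i j) :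
    IsAdmissible B (b 0) ↔ (τ = 1 ∨ τ = 3) ∨ ((τ = 0 ∨ τ = 2 ∨ τ = 4) ∧ Odd n) :=
  C8_divisor_admissibility_general τ n hτ0 hτ4 B hsymm b hgram
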